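/- Let p ≥ 1 and d with 1 ≤ d < p, Δ = gcd(d,p). The set of circular binary words w : ZMod p → {0,1} such that (i) there is no i with w(i)=0 and w(i+d)=0, and (ii) there is no i with w(i)=w(i+d)=w(i+2d)=1, has cardinality P(p/Δ)^Δ, where P is the Perrin sequence (P(0)=3, P(1)=0, P(2)=2, P(n)=P(n-2)+P(n-3)). -/

import Mathlib

def perrin : ℕ → ℕ
  | 0 => 3
  | 1 => 0
  | 2 => 2
  | (n + 3) => perrin (n + 1) + perrin n

/-!
Walking around `ZMod p` in steps of `d` splits it into `gcd d p` cycles of length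
`n = p / gcd d p`, and both forbidden patterns only look at positions `i, i + d, i + 2d` of a
single cycle. So an admissible word is an independent choice, for every cycle, of a cyclic word of
length `n` avoiding `00` and `111`. Recording the pairs `(w i, w (i + 1))` turns such a cyclic word
into a closed walk of length `n` in a transfer digraph on the three pairs `01, 10, 11`; closed walks
are counted by `trace (M ^ n)`, and `M ^ 3 = M + 1` gives these traces the Perrin recurrence.
-/

open Matrix

def Avoids00And111 {G : Type*} [Add G] (a : G) (w : G → Bool) : Prop :=
  (∀ i, ¬ (w i = false ∧ w (i + a) = false)) ∧
    ∀ i, ¬ (w i = true ∧ w (i + a) = true ∧ w (i + a + a) = true)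

section Interlacing

variable {ι H G : Type*} [Add H] [Add G] {a : G} {b : H}

theorem avoids00And111_iff_forall (e : ι × H ≃ G) (he : ∀ r k, e (r, k + b) = e (r, k) + a)
    (w : G → Bool) :
    Avoids00And111 a w ↔ ∀ r, Avoids00And111 b fun k => w (e (r, k)) := by
  have forall_iff (P : G → Prop) : (∀ i, P i) ↔ ∀ r k, P (e (r, k)) :=
    e.forall_congr_right.symm.trans Prod.forall
  simp only [Avoids00And111, forall_and, forall_iff, he]

def avoids00And111EquivPi (e : ι × H ≃ G) (he : ∀ r k, e (r, k + b) = e (r, k) + a) :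
    {w : G → Bool // Avoids00And111 a w} ≃ (ι → {v : H → Bool // Avoids00And111 b v}) :=
  (((Equiv.arrowCongr e.symm (Equiv.refl Bool)).trans (Equiv.curry ι H Bool)).subtypeEquiv
    fun w => avoids00And111_iff_forall e he w).trans Equiv.subtypePiEquivPi

end Interlacing

instance Nat.neZero_div_gcd (p d : ℕ) [NeZero p] : NeZero (p / d.gcd p) :=
  have hp := NeZero.pos p
  NeZero.of_pos (Nat.div_pos (Nat.gcd_le_right (m := d) hp) (Nat.gcd_pos_of_pos_right d hp))

namespace ZMod

variable (p d : ℕ)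

-- `r < gcd d p` picks a coset of the subgroup generated by `d`; `k` walks along it in steps of `d`.
def interlock (x : Fin (d.gcd p) × ZMod (p / d.gcd p)) : ZMod p := x.1 + x.2.val * d

variable [NeZero p]

theorem interlock_add_one (r : Fin (d.gcd p)) (k : ZMod (p / d.gcd p)) :
    interlock p d (r, k + 1) = interlock p d (r, k) + d := by
  have hval : (k + 1).val ≡ k.val + 1 [MOD p / d.gcd p] := by
    rw [← ZMod.natCast_eq_natCast_iff]
    simp
  have hdvd : p ∣ p / d.gcd p * d := by
    rw [Nat.div_mul_right_comm (Nat.gcd_dvd_right d p),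
      Nat.mul_div_assoc _ (Nat.gcd_dvd_left d p)]
    exact dvd_mul_right _ _
  have hmul := (ZMod.natCast_eq_natCast_iff _ _ _).mpr ((hval.mul_right' d).of_dvd hdvd)
  push_cast at hmul
  rw [interlock, interlock, hmul]
  ring

theorem interlock_injective : Function.Injective (interlock p d) := by
  rintro ⟨r, k⟩ ⟨r', k'⟩ h
  have hr : r = r' := by
    have hmod := congrArg (ZMod.castHom (Nat.gcd_dvd_right d p) (ZMod (d.gcd p))) h
    simp only [interlock, map_add, map_mul, map_natCast,
      (ZMod.natCast_eq_zero_iff d _).mpr (Nat.gcd_dvd_left d p), mul_zero, add_zero,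
      ZMod.natCast_eq_natCast_iff', Nat.mod_eq_of_lt r.isLt, Nat.mod_eq_of_lt r'.isLt] at hmod
    exact Fin.ext hmod
  subst hr
  have hk : k.val * d ≡ k'.val * d [MOD p] := by
    rw [← ZMod.natCast_eq_natCast_iff]
    simpa [interlock] using h
  have hn := Nat.ModEq.cancel_right_div_gcd (NeZero.pos p) hk
  rw [Nat.gcd_comm] at hn
  rw [ZMod.val_injective _ (hn.eq_of_lt_of_lt k.val_lt k'.val_lt)]

theorem interlock_bijective : Function.Bijective (interlock p d) := by
  refine (interlock_injective p d).bijective_of_nat_card_le ?_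
  rw [Nat.card_prod, Nat.card_zmod, Nat.card_zmod, Nat.card_fin,
    Nat.mul_div_cancel' (Nat.gcd_dvd_right d p)]

noncomputable def interlockEquiv : Fin (d.gcd p) × ZMod (p / d.gcd p) ≃ ZMod p :=
  .ofBijective _ (interlock_bijective p d)

end ZMod

theorem Fin.sum_univ_pi_succ {ι M : Type*} [Fintype ι] [AddCommMonoid M] {m : ℕ}
    (f : (Fin (m + 1) → ι) → M) : ∑ s, f s = ∑ i, ∑ s : Fin m → ι, f (Fin.cons i s) :=
  ((Fin.consEquiv fun _ => ι).sum_comp f).symm.trans (Fintype.sum_prod_type _)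

namespace Matrix

variable {ι R : Type*} [Fintype ι] [DecidableEq ι] [CommSemiring R]

theorem pow_succ_apply_eq_sum_prod (A : Matrix ι ι R) (m : ℕ) (i j : ι) :
    (A ^ (m + 1)) i j = ∑ s : Fin m → ι,
      ∏ k, A ((Fin.cons i s : Fin (m + 1) → ι) k) ((Fin.snoc s j : Fin (m + 1) → ι) k) := by
  induction m generalizing i with
  | zero => simp [Fin.snoc]
  | succ m ih =>
    rw [pow_succ', mul_apply, Fin.sum_univ_pi_succ]
    refine Finset.sum_congr rfl fun l _ => ?_
    simp only [← Fin.cons_snoc_eq_snoc_cons, ih, Finset.mul_sum, Fin.prod_univ_succ (n := m + 1),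
      Fin.cons_zero, Fin.cons_succ]

theorem trace_pow_succ_eq_sum_prod (A : Matrix ι ι R) (m : ℕ) :
    trace (A ^ (m + 1)) = ∑ s : Fin (m + 1) → ι, ∏ k, A (s k) (s (k + 1)) := by
  rw [trace, Fin.sum_univ_pi_succ]
  refine Finset.sum_congr rfl fun i _ => ?_
  rw [diag_apply, pow_succ_apply_eq_sum_prod]
  refine Finset.sum_congr rfl fun s _ => Finset.prod_congr rfl fun k _ => ?_
  congr 1
  induction k using Fin.lastCases with
  | last => simp
  | cast k => simp [Fin.coeSucc_eq_succ]

theorem card_closed_walks_eq_trace_pow (r : ι → ι → Prop) [DecidableRel r] (n : ℕ)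
    [NeZero n] :
    Nat.card {s : ZMod n → ι // ∀ x, r (s x) (s (x + 1))} =
      trace (of (fun i j => if r i j then 1 else 0) ^ n) := by
  obtain ⟨m, rfl⟩ := Nat.exists_eq_succ_of_ne_zero (NeZero.ne n)
  change Nat.card {s : Fin (m + 1) → ι // ∀ x, r (s x) (s (x + 1))} = _
  rw [trace_pow_succ_eq_sum_prod, Nat.card_eq_fintype_card, Fintype.card_subtype]
  simp only [of_apply, Finset.prod_boole, Finset.mem_univ, true_implies, Finset.sum_boole,
    Nat.cast_id]

end Matrix

abbrev PerrinState : Type := {x : Bool × Bool // (x.1 || x.2) = true}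

def PerrinStep (s t : PerrinState) : Prop := s.1.2 = t.1.1 ∧ ¬ (s.1.1 ∧ t.1.1 ∧ t.1.2)

instance : DecidableRel PerrinStep := fun _ _ => inferInstanceAs (Decidable (_ ∧ _))

def perrinMatrix : Matrix PerrinState PerrinState ℕ :=
  of fun s t => if PerrinStep s t then 1 else 0

theorem perrinMatrix_pow_three : perrinMatrix ^ 3 = perrinMatrix + 1 := by decide

theorem trace_perrinMatrix_pow (n : ℕ) : trace (perrinMatrix ^ n) = perrin n := by
  induction n using perrin.induct with
  | case1 | case2 | case3 => decide
  | case4 n ih₁ ih₀ =>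
    have h : perrinMatrix ^ (n + 3) = perrinMatrix ^ (n + 1) + perrinMatrix ^ n := by
      rw [pow_add, perrinMatrix_pow_three, mul_add, mul_one, ← pow_succ]
    rw [perrin, h, trace_add, ih₁, ih₀]

def avoids00And111EquivWalks {G : Type*} [Add G] (a : G) :
    {w : G → Bool // Avoids00And111 a w} ≃
      {s : G → PerrinState // ∀ x, PerrinStep (s x) (s (x + a))} where
  toFun w := ⟨fun x => ⟨(w.1 x, w.1 (x + a)), by grind [w.2.1 x]⟩, fun x => by
    simpa [PerrinStep] using w.2.2 x⟩
  invFun s := ⟨fun x => (s.1 x).1.1, fun x => by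
    grind [(s.1 x).2, s.2 x, PerrinStep], fun x => by grind [s.2 x, s.2 (x + a), PerrinStep]⟩
  left_inv w := rfl
  right_inv s := by
    ext x
    · rfl
    · exact ((s.2 x).1).symm

theorem card_avoids00And111_one (n : ℕ) [NeZero n] :
    Nat.card {w : ZMod n → Bool // Avoids00And111 1 w} = perrin n := by
  rw [Nat.card_congr (avoids00And111EquivWalks 1), card_closed_walks_eq_trace_pow,
    ← trace_perrinMatrix_pow, perrinMatrix]

theorem circular_words_avoiding_0u0_1u1u1_general (p d : ℕ) (hdp : d < p) :
    Nat.card {w : ZMod p → Bool //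
        (∀ i : ZMod p, ¬ (w i = false ∧ w (i + (d : ZMod p)) = false)) ∧
        (∀ i : ZMod p, ¬ (w i = true ∧ w (i + (d : ZMod p)) = true ∧
            w (i + (2 * d : ℕ)) = true))}
      = perrin (p / Nat.gcd d p) ^ Nat.gcd d p := by
  have : NeZero p := ⟨by omega⟩
  simp only [two_mul, Nat.cast_add, ← add_assoc]
  change Nat.card {w // Avoids00And111 (d : ZMod p) w} = _
  rw [Nat.card_congr (avoids00And111EquivPi (ZMod.interlockEquiv p d)
      (ZMod.interlock_add_one p d)), Nat.card_fun, card_avoids00And111_one, Nat.card_fin]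

theorem circular_words_avoiding_0u0_1u1u1 (p d : ℕ) (hd : 1 ≤ d) (hdp : d < p) :
    Nat.card {w : ZMod p → Bool //
        (∀ i : ZMod p, ¬ (w i = false ∧ w (i + (d : ZMod p)) = false)) ∧
        (∀ i : ZMod p, ¬ (w i = true ∧ w (i + (d : ZMod p)) = true ∧
            w (i + (2 * d : ℕ)) = true))}
      = perrin (p / Nat.gcd d p) ^ Nat.gcd d p :=
  circular_words_avoiding_0u0_1u1u1_general p d hdp
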